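/- Let q be a probability density on ℝ whose Fourier transform q* never vanishes, let m, n be positive integers, let x₁, …, x_n be real numbers, and let ε₁, …, ε_n be independent random variables each with density q. Set Y_i = x_i + ε_i. Then ∑_{j∈ℤ} Var[ (1/n)∑_{i=1}^n v_{φ_{m,j}}(Y_i) ] ≤ Δ(m)/n, where Δ(m) = (1/2π)∫_{−πm}^{πm} |q*(u)|^{−2} du. -/

import Mathlib

open MeasureTheory ProbabilityTheory

/-- Fourier transform `t*(u) = ∫ e^{-ixu} t(x) dx` of a real-valued function on `ℝ`. -/
noncomputable def ft1 (t : ℝ → ℝ) (u : ℝ) : ℂ :=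
  ∫ x : ℝ, Complex.exp (-(Complex.I * x * u)) * t x

/-- The Fourier transform of `φ_{m,j}` (where `φ_{m,j}(x) = √m sin(π(mx−j))/(π(mx−j))`),
namely `u ↦ (1/√m) e^{−iju/m} 1_{[−πm,πm]}(u)`. -/
noncomputable def phimjstar (m : ℕ) (j : ℤ) : ℝ → ℂ :=
  (Set.Icc (-(Real.pi * m)) (Real.pi * m)).indicator
    fun u => ((Real.sqrt m)⁻¹ : ℝ) * Complex.exp (-(Complex.I * j * u / m))

/-- `v_{φ_{m,j}}`, the inverse Fourier transform of `φ_{m,j}*/q*(−·)` (a real-valued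
function, here recovered as the real part). -/
noncomputable def vphi (q : ℝ → ℝ) (m : ℕ) (j : ℤ) (x : ℝ) : ℝ :=
  (((2 * Real.pi : ℝ) : ℂ)⁻¹ *
    ∫ u : ℝ, Complex.exp (Complex.I * x * u) * (phimjstar m j u / ft1 q (-u))).re

/-- `Δ(m) = (1/2π) ∫_{−πm}^{πm} |q*(u)|⁻² du`. -/
noncomputable def Delta (q : ℝ → ℝ) (m : ℕ) : ℝ :=
  (2 * Real.pi)⁻¹ *
    ∫ u in Set.Icc (-(Real.pi * m)) (Real.pi * m), (‖ft1 q u‖ ^ 2)⁻¹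


open Complex

lemma norm_exp_I_mul (t : ℝ) : ‖Complex.exp (Complex.I * t)‖ = 1 := by
  rw [Complex.norm_exp]
  simp [Complex.mul_re]

lemma norm_exp_neg_I_mul (t s : ℝ) : ‖Complex.exp (-(Complex.I * t * s))‖ = 1 := by
  rw [Complex.norm_exp]
  simp [Complex.mul_re]

lemma ft1_continuous {q : ℝ → ℝ} (hq : Integrable q) : Continuous (ft1 q) := by
  apply continuous_of_dominated (bound := fun x => |q x|)
  · intro u
    exact ((Complex.continuous_exp.comp (by fun_prop)).aestronglyMeasurable).mul
      (Complex.continuous_ofReal.comp_aestronglyMeasurable hq.1)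
  · intro u
    filter_upwards with x
    rw [norm_mul, norm_exp_neg_I_mul, one_mul, Complex.norm_real, Real.norm_eq_abs]
  · exact hq.abs
  · filter_upwards with x
    exact ((Complex.continuous_exp.comp (by fun_prop)).mul continuous_const)

lemma ft1_neg (q : ℝ → ℝ) (u : ℝ) : ft1 q (-u) = (starRingEnd ℂ) (ft1 q u) := by
  unfold ft1
  rw [← integral_conj]
  congr 1; funext x
  rw [map_mul, ← Complex.exp_conj]
  congr 1
  · congr 1
    simp only [map_neg, map_mul, Complex.conj_I, Complex.conj_ofReal]
    push_cast
    ring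
  · exact (Complex.conj_ofReal _).symm

lemma norm_ft1_neg (q : ℝ → ℝ) (u : ℝ) : ‖ft1 q (-u)‖ = ‖ft1 q u‖ := by
  rw [ft1_neg]; exact RCLike.norm_conj _

noncomputable def Iset (m : ℕ) : Set ℝ := Set.Icc (-(Real.pi * m)) (Real.pi * m)

lemma Iset_nonempty (m : ℕ) : (Iset m).Nonempty := by
  apply Set.nonempty_Icc.2
  have : (0:ℝ) ≤ Real.pi * m := by positivity
  linarith

lemma exists_ft1_bound {q : ℝ → ℝ} (hqint : Integrable q) (hqne : ∀ u, ft1 q u ≠ 0) (m : ℕ) :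
    ∃ δ : ℝ, 0 < δ ∧ ∀ u ∈ Iset m, δ ≤ ‖ft1 q u‖ := by
  have hc : ContinuousOn (fun u => ‖ft1 q u‖) (Iset m) :=
    ((ft1_continuous hqint).norm).continuousOn
  obtain ⟨u₀, hu₀, hmin⟩ := isCompact_Icc.exists_isMinOn (Iset_nonempty m) hc
  exact ⟨‖ft1 q u₀‖, norm_pos_iff.2 (hqne u₀), fun u hu => hmin hu⟩

lemma isFiniteRestrict (m : ℕ) : IsFiniteMeasure (volume.restrict (Iset m)) :=
  ⟨by rw [Measure.restrict_apply_univ]; exact measure_Icc_lt_top⟩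

lemma memLp_indicator_of_bounded {m : ℕ} {f : ℝ → ℂ} (hf : Continuous f) {C : ℝ}
    (hC : ∀ u ∈ Iset m, ‖f u‖ ≤ C) : MemLp ((Iset m).indicator f) 2 volume := by
  have hIm : MeasurableSet (Iset m) := measurableSet_Icc
  rw [memLp_indicator_iff_restrict hIm]
  haveI := isFiniteRestrict m
  apply MemLp.of_bound hf.aestronglyMeasurable C
  exact (ae_restrict_iff' hIm).2 (ae_of_all _ hC)

lemma norm_exp_I_mul_real (r : ℝ) : ‖Complex.exp (Complex.I * r)‖ = 1 := by
  rw [Complex.norm_exp]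
  simp [Complex.mul_re]

noncomputable def efun (m : ℕ) (j : ℤ) : ℝ → ℂ :=
  (Iset m).indicator fun u =>
    ((Real.sqrt (2 * Real.pi * m))⁻¹ : ℝ) * Complex.exp (Complex.I * j * u / m)

noncomputable def gfun (q : ℝ → ℝ) (m : ℕ) (y : ℝ) : ℝ → ℂ :=
  (Iset m).indicator fun u => Complex.exp (Complex.I * y * u) / ft1 q (-u)

lemma norm_exp_I_jum (m : ℕ) (j : ℤ) (u : ℝ) : ‖Complex.exp (Complex.I * j * u / m)‖ = 1 := by
  have : Complex.I * j * u / m = Complex.I * ((j * u / m : ℝ) : ℂ) := by push_cast; ring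
  rw [this, norm_exp_I_mul_real]

lemma norm_exp_I_yu (y u : ℝ) : ‖Complex.exp (Complex.I * y * u)‖ = 1 := by
  have : Complex.I * y * u = Complex.I * ((y * u : ℝ) : ℂ) := by push_cast; ring
  rw [this, norm_exp_I_mul_real]

lemma efun_memLp (m : ℕ) (j : ℤ) : MemLp (efun m j) 2 volume := by
  apply memLp_indicator_of_bounded (C := (Real.sqrt (2 * Real.pi * m))⁻¹)
  · fun_prop
  · intro u _
    rw [norm_mul, Complex.norm_real, norm_exp_I_jum, mul_one, Real.norm_eq_abs]
    exact le_of_eq (abs_of_nonneg (by positivity))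

lemma gfun_memLp {q : ℝ → ℝ} (hqint : Integrable q) (hqne : ∀ u, ft1 q u ≠ 0) (m : ℕ) (y : ℝ) :
    MemLp (gfun q m y) 2 volume := by
  obtain ⟨δ, hδ, hδle⟩ := exists_ft1_bound hqint hqne m
  apply memLp_indicator_of_bounded (C := δ⁻¹)
  · exact (Complex.continuous_exp.comp (by fun_prop)).div
      ((ft1_continuous hqint).comp continuous_neg) (fun u => hqne (-u))
  · intro u hu
    rw [norm_div, norm_exp_I_yu, norm_ft1_neg]
    have h1 : δ ≤ ‖ft1 q u‖ := hδle u hu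
    rw [one_div]
    exact inv_anti₀ hδ h1

lemma efun_inner_integral (m : ℕ) (hm : 0 < m) (j k : ℤ) :
    ∫ u : ℝ, (starRingEnd ℂ) (efun m j u) * efun m k u =
      if j = k then 1 else 0 := by
  have hIm : MeasurableSet (Iset m) := measurableSet_Icc
  have hm' : (m : ℂ) ≠ 0 := Nat.cast_ne_zero.2 hm.ne'
  have hrw : ∀ u : ℝ, (starRingEnd ℂ) (efun m j u) * efun m k u =
      (Iset m).indicator (fun u => (((2 * Real.pi * m)⁻¹ : ℝ) : ℂ) *
        Complex.exp (Complex.I * ((k : ℂ) - (j : ℂ)) * u / m)) u := by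
    intro u
    unfold efun
    by_cases hu : u ∈ Iset m
    · rw [Set.indicator_of_mem hu, Set.indicator_of_mem hu, Set.indicator_of_mem hu]
      rw [map_mul, Complex.conj_ofReal, ← Complex.exp_conj]
      have h1 : (starRingEnd ℂ) (Complex.I * j * u / m) = -(Complex.I * j * u / m) := by
        simp only [map_div₀, map_mul, Complex.conj_I, Complex.conj_ofReal, map_intCast,
          map_natCast]
        ring
      rw [h1, mul_mul_mul_comm, ← Complex.exp_add]
      have h2 : -(Complex.I * j * u / m) + Complex.I * k * u / m
          = Complex.I * ((k : ℂ) - (j : ℂ)) * u / m := by ring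
      have h3 : (((Real.sqrt (2 * Real.pi * m))⁻¹ : ℝ) : ℂ) *
          (((Real.sqrt (2 * Real.pi * m))⁻¹ : ℝ) : ℂ) = (((2 * Real.pi * m)⁻¹ : ℝ) : ℂ) := by
        rw [← Complex.ofReal_mul, ← mul_inv, Real.mul_self_sqrt (by positivity)]
      rw [h2, h3]
    · rw [Set.indicator_of_notMem hu, Set.indicator_of_notMem hu, Set.indicator_of_notMem hu]
      simp
  simp_rw [hrw]
  rw [integral_indicator hIm]
  by_cases hjk : j = k
  · subst hjk
    rw [if_pos rfl]
    have h4 : ∀ u : ℝ, Complex.exp (Complex.I * ((j : ℂ) - (j : ℂ)) * u / m) = 1 := by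
      intro u; simp
    simp_rw [h4, mul_one]
    rw [setIntegral_const]
    show (volume (Iset m)).toReal • _ = _
    rw [show Iset m = Set.Icc (-(Real.pi * m)) (Real.pi * m) from rfl, Real.volume_Icc,
      show Real.pi * m - -(Real.pi * m) = 2 * Real.pi * m by ring,
      ENNReal.toReal_ofReal (by positivity)]
    rw [Complex.real_smul, ← Complex.ofReal_mul, mul_inv_cancel₀ (by positivity),
      Complex.ofReal_one]
  · rw [if_neg hjk]
    set c : ℂ := Complex.I * ((k : ℂ) - (j : ℂ)) / m with hc_def
    have hsub : ((k : ℂ) - (j : ℂ)) ≠ 0 := by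
      rw [sub_ne_zero]
      exact_mod_cast (fun h => hjk (by exact_mod_cast h.symm) : (k : ℂ) ≠ (j : ℂ))
    have hc : c ≠ 0 := div_ne_zero (mul_ne_zero Complex.I_ne_zero hsub) hm'
    have h5 : ∀ u : ℝ, Complex.I * ((k : ℂ) - (j : ℂ)) * u / m = c * u := by
      intro u; rw [hc_def]; ring
    simp_rw [h5]
    rw [MeasureTheory.integral_const_mul]
    have hle : -(Real.pi * m) ≤ Real.pi * m := by
      have : (0:ℝ) ≤ Real.pi * m := by positivity
      linarith
    rw [show Iset m = Set.Icc (-(Real.pi * m)) (Real.pi * m) from rfl,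
      integral_Icc_eq_integral_Ioc, ← intervalIntegral.integral_of_le hle,
      integral_exp_mul_complex hc]
    set l : ℤ := k - j with hl_def
    have hexp1 : Complex.exp (c * (Real.pi * m : ℝ)) = (-1 : ℂ) ^ l := by
      have : c * (Real.pi * m : ℝ) = (l : ℂ) * ((Real.pi : ℂ) * Complex.I) := by
        rw [hc_def, hl_def]
        push_cast
        field_simp
      rw [this, Complex.exp_int_mul, Complex.exp_pi_mul_I]
    have hexp2 : Complex.exp (c * ((-(Real.pi * m) : ℝ) : ℂ)) = ((-1 : ℂ) ^ l)⁻¹ := by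
      have : c * ((-(Real.pi * m) : ℝ) : ℂ) = ((-l : ℤ) : ℂ) * ((Real.pi : ℂ) * Complex.I) := by
        rw [hc_def, hl_def]
        push_cast
        field_simp
      rw [this, Complex.exp_int_mul, Complex.exp_pi_mul_I, zpow_neg]
    rw [hexp1, hexp2]
    have h6 : ((-1 : ℂ) ^ l)⁻¹ = (-1 : ℂ) ^ l := by
      have : ((-1 : ℂ) ^ l) * ((-1 : ℂ) ^ l) = 1 := by
        rw [← zpow_add₀ (by norm_num : (-1:ℂ) ≠ 0)]
        exact Even.neg_one_zpow ⟨l, rfl⟩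
      exact inv_eq_of_mul_eq_one_right this
    rw [h6, sub_self, zero_div, mul_zero]

lemma efun_orthonormal (m : ℕ) (hm : 0 < m) :
    Orthonormal ℂ (fun j : ℤ => MemLp.toLp (efun m j) (efun_memLp m j)) := by
  rw [orthonormal_iff_ite]
  intro j k
  rw [L2.inner_def]
  have h : (∫ u : ℝ, (inner ℂ ((MemLp.toLp (efun m j) (efun_memLp m j) : Lp ℂ 2 volume) u)
        ((MemLp.toLp (efun m k) (efun_memLp m k) : Lp ℂ 2 volume) u) : ℂ))
      = ∫ u : ℝ, (starRingEnd ℂ) (efun m j u) * efun m k u := by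
    apply integral_congr_ae
    filter_upwards [MemLp.coeFn_toLp (efun_memLp m j), MemLp.coeFn_toLp (efun_memLp m k)]
      with u h1 h2
    rw [RCLike.inner_apply', h1, h2]
  rw [h, efun_inner_integral m hm j k]

section Main
variable {q : ℝ → ℝ} {m : ℕ}

lemma inner_efun_gfun (hqint : Integrable q) (hqne : ∀ u, ft1 q u ≠ 0) (y : ℝ) (j : ℤ) :
    (inner ℂ (MemLp.toLp (efun m j) (efun_memLp m j))
        (MemLp.toLp (gfun q m y) (gfun_memLp hqint hqne m y)) : ℂ)
      = (((Real.sqrt (2 * Real.pi * m))⁻¹ : ℝ) : ℂ) *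
        ∫ u in Iset m, Complex.exp (-(Complex.I * j * u / m)) *
          (Complex.exp (Complex.I * y * u) / ft1 q (-u)) := by
  rw [L2.inner_def]
  have h : (∫ u : ℝ, (inner ℂ ((MemLp.toLp (efun m j) (efun_memLp m j) : Lp ℂ 2 volume) u)
        ((MemLp.toLp (gfun q m y) (gfun_memLp hqint hqne m y) : Lp ℂ 2 volume) u) : ℂ))
      = ∫ u : ℝ, (starRingEnd ℂ) (efun m j u) * gfun q m y u := by
    apply integral_congr_ae
    filter_upwards [MemLp.coeFn_toLp (efun_memLp m j),
      MemLp.coeFn_toLp (gfun_memLp hqint hqne m y)] with u h1 h2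
    rw [RCLike.inner_apply', h1, h2]
  rw [h]
  have hrw : ∀ u : ℝ, (starRingEnd ℂ) (efun m j u) * gfun q m y u
      = (Iset m).indicator (fun u => (((Real.sqrt (2 * Real.pi * m))⁻¹ : ℝ) : ℂ) *
          (Complex.exp (-(Complex.I * j * u / m)) *
            (Complex.exp (Complex.I * y * u) / ft1 q (-u)))) u := by
    intro u
    unfold efun gfun
    by_cases hu : u ∈ Iset m
    · rw [Set.indicator_of_mem hu, Set.indicator_of_mem hu, Set.indicator_of_mem hu]
      rw [map_mul, Complex.conj_ofReal, ← Complex.exp_conj]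
      have h1 : (starRingEnd ℂ) (Complex.I * j * u / m) = -(Complex.I * j * u / m) := by
        simp only [map_div₀, map_mul, Complex.conj_I, Complex.conj_ofReal, map_intCast,
          map_natCast]
        ring
      rw [h1]; ring
    · rw [Set.indicator_of_notMem hu, Set.indicator_of_notMem hu, Set.indicator_of_notMem hu]
      simp
  simp_rw [hrw]
  have hIm : MeasurableSet (Iset m) := measurableSet_Icc
  rw [integral_indicator hIm,
    MeasureTheory.integral_const_mul]

lemma vphi_eq_re_inner (hqint : Integrable q) (hqne : ∀ u, ft1 q u ≠ 0) (hm : 0 < m) (y : ℝ) (j : ℤ) :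
    vphi q m j y = (Real.sqrt (2 * Real.pi))⁻¹ *
      (inner ℂ (MemLp.toLp (efun m j) (efun_memLp m j))
        (MemLp.toLp (gfun q m y) (gfun_memLp hqint hqne m y)) : ℂ).re := by
  have hrw : ∀ u : ℝ, Complex.exp (Complex.I * y * u) * (phimjstar m j u / ft1 q (-u))
      = (Iset m).indicator (fun u => (((Real.sqrt m)⁻¹ : ℝ) : ℂ) *
          (Complex.exp (-(Complex.I * j * u / m)) *
            (Complex.exp (Complex.I * y * u) / ft1 q (-u)))) u := by
    intro u
    unfold phimjstar
    by_cases hu : u ∈ Iset m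
    · rw [Set.indicator_of_mem (show u ∈ Set.Icc _ _ from hu),
        Set.indicator_of_mem hu]
      ring
    · rw [Set.indicator_of_notMem (show u ∉ Set.Icc _ _ from hu),
        Set.indicator_of_notMem hu]
      simp
  rw [vphi]
  simp_rw [hrw]
  have hIm : MeasurableSet (Iset m) := measurableSet_Icc
  rw [integral_indicator hIm,
    MeasureTheory.integral_const_mul, inner_efun_gfun hqint hqne]
  set B : ℂ := ∫ u in Iset m, Complex.exp (-(Complex.I * j * u / m)) *
    (Complex.exp (Complex.I * y * u) / ft1 q (-u)) with hB
  have hm0 : (0:ℝ) < Real.sqrt m := Real.sqrt_pos.2 (by exact_mod_cast hm)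
  have hpi : (0:ℝ) < Real.sqrt (2 * Real.pi) := Real.sqrt_pos.2 (by positivity)
  have hc : (((2 * Real.pi : ℝ) : ℂ))⁻¹ * ((((Real.sqrt m)⁻¹ : ℝ) : ℂ) * B)
      = (((Real.sqrt (2 * Real.pi))⁻¹ : ℝ) : ℂ) *
        ((((Real.sqrt (2 * Real.pi * m))⁻¹ : ℝ) : ℂ) * B) := by
    rw [← Complex.ofReal_inv]
    rw [show ((((Real.sqrt m)⁻¹ : ℝ) : ℂ) * B) = (((Real.sqrt m)⁻¹ : ℝ) : ℂ) * B from rfl]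
    have key : ((2 * Real.pi)⁻¹ : ℝ) * (Real.sqrt m)⁻¹
        = (Real.sqrt (2 * Real.pi))⁻¹ * (Real.sqrt (2 * Real.pi * m))⁻¹ := by
      rw [Real.sqrt_mul (by positivity) (m : ℝ)]
      rw [← Real.mul_self_sqrt (show (0:ℝ) ≤ 2 * Real.pi by positivity)]
      field_simp
      rw [Real.sqrt_sq (by positivity)]
    calc (((2 * Real.pi)⁻¹ : ℝ) : ℂ) * ((((Real.sqrt m)⁻¹ : ℝ) : ℂ) * B)
        = ((((2 * Real.pi)⁻¹ * (Real.sqrt m)⁻¹ : ℝ)) : ℂ) * B := by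
          push_cast; ring
      _ = (((Real.sqrt (2 * Real.pi))⁻¹ * (Real.sqrt (2 * Real.pi * m))⁻¹ : ℝ) : ℂ) * B := by
          rw [key]
      _ = (((Real.sqrt (2 * Real.pi))⁻¹ : ℝ) : ℂ) *
          ((((Real.sqrt (2 * Real.pi * m))⁻¹ : ℝ) : ℂ) * B) := by
          push_cast; ring
  rw [hc, Complex.re_ofReal_mul]

lemma norm_gfun_sq (hqint : Integrable q) (hqne : ∀ u, ft1 q u ≠ 0) (y : ℝ) :
    ‖MemLp.toLp (gfun q m y) (gfun_memLp hqint hqne m y)‖ ^ 2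
      = ∫ u in Iset m, (‖ft1 q u‖ ^ 2)⁻¹ := by
  have hIm : MeasurableSet (Iset m) := measurableSet_Icc
  set G := MemLp.toLp (gfun q m y) (gfun_memLp hqint hqne m y) with hG
  rw [← inner_self_eq_norm_sq (𝕜 := ℂ) G, L2.inner_def]
  have h : (∫ u : ℝ, (inner ℂ ((G : Lp ℂ 2 volume) u) ((G : Lp ℂ 2 volume) u) : ℂ))
      = ∫ u : ℝ, ((‖gfun q m y u‖ ^ 2 : ℝ) : ℂ) := by
    apply integral_congr_ae
    filter_upwards [MemLp.coeFn_toLp (gfun_memLp hqint hqne m y)] with u h1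
    rw [RCLike.inner_apply', h1, mul_comm, Complex.mul_conj, Complex.normSq_eq_norm_sq]
  have h3 : (∫ u : ℝ, ((‖gfun q m y u‖ ^ 2 : ℝ) : ℂ)) = ((∫ u : ℝ, ‖gfun q m y u‖ ^ 2 : ℝ) : ℂ) :=
    integral_ofReal
  rw [h, h3, show RCLike.re (((∫ u : ℝ, ‖gfun q m y u‖ ^ 2 : ℝ)) : ℂ)
    = ∫ u : ℝ, ‖gfun q m y u‖ ^ 2 from Complex.ofReal_re _]
  have h2 : ∀ u : ℝ, ‖gfun q m y u‖ ^ 2 = (Iset m).indicator (fun u => (‖ft1 q u‖ ^ 2)⁻¹) u := by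
    intro u
    unfold gfun
    by_cases hu : u ∈ Iset m
    · rw [Set.indicator_of_mem hu, Set.indicator_of_mem hu, norm_div, norm_exp_I_yu,
        norm_ft1_neg, div_pow, one_pow, one_div]
    · rw [Set.indicator_of_notMem hu, Set.indicator_of_notMem hu, norm_zero]
      norm_num
  simp_rw [h2]
  rw [integral_indicator hIm]

lemma bessel_pointwise (hqint : Integrable q) (hqne : ∀ u, ft1 q u ≠ 0) (hm : 0 < m) (S : Finset ℤ) (y : ℝ) :
    ∑ j ∈ S, (vphi q m j y) ^ 2 ≤ Delta q m := by
  have hON := efun_orthonormal m hm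
  set G := MemLp.toLp (gfun q m y) (gfun_memLp hqint hqne m y) with hG
  have hb := hON.sum_inner_products_le (s := S) G
  have hre : ∀ z : ℂ, (z.re) ^ 2 ≤ ‖z‖ ^ 2 := by
    intro z
    rw [← _root_.sq_abs z.re]
    exact pow_le_pow_left₀ (abs_nonneg _) (Complex.abs_re_le_norm z) 2
  have hsq : ((Real.sqrt (2 * Real.pi))⁻¹) ^ 2 = (2 * Real.pi)⁻¹ := by
    rw [inv_pow, Real.sq_sqrt (by positivity)]
  calc ∑ j ∈ S, (vphi q m j y) ^ 2
      = ∑ j ∈ S, ((Real.sqrt (2 * Real.pi))⁻¹) ^ 2 *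
        ((inner ℂ (MemLp.toLp (efun m j) (efun_memLp m j)) G : ℂ).re) ^ 2 := by
        refine Finset.sum_congr rfl fun j _ => ?_
        rw [vphi_eq_re_inner hqint hqne hm, mul_pow, hG]
    _ ≤ ∑ j ∈ S, (2 * Real.pi)⁻¹ *
        ‖(inner ℂ (MemLp.toLp (efun m j) (efun_memLp m j)) G : ℂ)‖ ^ 2 := by
        refine Finset.sum_le_sum fun j _ => ?_
        rw [hsq]
        exact mul_le_mul_of_nonneg_left (hre _) (by positivity)
    _ = (2 * Real.pi)⁻¹ * ∑ j ∈ S,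
        ‖(inner ℂ (MemLp.toLp (efun m j) (efun_memLp m j)) G : ℂ)‖ ^ 2 := by
        rw [Finset.mul_sum]
    _ ≤ (2 * Real.pi)⁻¹ * ‖G‖ ^ 2 :=
        mul_le_mul_of_nonneg_left hb (by positivity)
    _ = Delta q m := by
        rw [norm_gfun_sq hqint hqne]
        rfl

end Main

section C
variable {q : ℝ → ℝ} {m : ℕ}

lemma wfun_integrable (hqint : Integrable q) (hqne : ∀ u, ft1 q u ≠ 0) (j : ℤ) :
    Integrable (fun u => phimjstar m j u / ft1 q (-u)) := by
  have hIm : MeasurableSet (Iset m) := measurableSet_Icc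
  have hrw : (fun u => phimjstar m j u / ft1 q (-u)) = (Iset m).indicator
      (fun u => (((Real.sqrt m)⁻¹ : ℝ) : ℂ) * Complex.exp (-(Complex.I * j * u / m))
        / ft1 q (-u)) := by
    funext u
    unfold phimjstar
    by_cases hu : u ∈ Iset m
    · rw [Set.indicator_of_mem (show u ∈ Set.Icc _ _ from hu), Set.indicator_of_mem hu]
    · rw [Set.indicator_of_notMem (show u ∉ Set.Icc _ _ from hu), Set.indicator_of_notMem hu,
        zero_div]
  rw [hrw]
  apply IntegrableOn.integrable_indicator _ hIm
  apply ContinuousOn.integrableOn_compact isCompact_Icc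
  apply Continuous.continuousOn
  exact (continuous_const.mul (Complex.continuous_exp.comp (by fun_prop))).div
    ((ft1_continuous hqint).comp continuous_neg) (fun u => hqne (-u))

lemma vphi_continuous (hqint : Integrable q) (hqne : ∀ u, ft1 q u ≠ 0) (j : ℤ) :
    Continuous (vphi q m j) := by
  unfold vphi
  apply Complex.continuous_re.comp
  apply Continuous.mul continuous_const
  apply continuous_of_dominated (bound := fun u => ‖phimjstar m j u / ft1 q (-u)‖)
  · intro y
    exact ((Complex.continuous_exp.comp (by fun_prop)).aestronglyMeasurable).mul
      (wfun_integrable hqint hqne j).1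
  · intro y
    filter_upwards with u
    rw [norm_mul, norm_exp_I_yu, one_mul]
  · exact (wfun_integrable hqint hqne j).norm
  · filter_upwards with u
    exact (Complex.continuous_exp.comp (by fun_prop)).mul continuous_const

lemma vphi_abs_le (hqint : Integrable q) (hqne : ∀ u, ft1 q u ≠ 0) (j : ℤ) (y : ℝ) :
    |vphi q m j y| ≤ (2 * Real.pi)⁻¹ * ∫ u : ℝ, ‖phimjstar m j u / ft1 q (-u)‖ := by
  unfold vphi
  calc |(((2 * Real.pi : ℝ) : ℂ)⁻¹ *
        ∫ u : ℝ, Complex.exp (Complex.I * y * u) * (phimjstar m j u / ft1 q (-u))).re|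
      ≤ ‖((2 * Real.pi : ℝ) : ℂ)⁻¹ *
        ∫ u : ℝ, Complex.exp (Complex.I * y * u) * (phimjstar m j u / ft1 q (-u))‖ := by
        exact Complex.abs_re_le_norm _
    _ = (2 * Real.pi)⁻¹ *
        ‖∫ u : ℝ, Complex.exp (Complex.I * y * u) * (phimjstar m j u / ft1 q (-u))‖ := by
        rw [norm_mul, norm_inv, Complex.norm_real, Real.norm_eq_abs,
          _root_.abs_of_nonneg (by positivity)]
    _ ≤ (2 * Real.pi)⁻¹ * ∫ u : ℝ, ‖phimjstar m j u / ft1 q (-u)‖ := by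
        apply mul_le_mul_of_nonneg_left _ (by positivity)
        calc ‖∫ u : ℝ, Complex.exp (Complex.I * y * u) * (phimjstar m j u / ft1 q (-u))‖
            ≤ ∫ u : ℝ, ‖Complex.exp (Complex.I * y * u) * (phimjstar m j u / ft1 q (-u))‖ :=
              norm_integral_le_integral_norm _
          _ = ∫ u : ℝ, ‖phimjstar m j u / ft1 q (-u)‖ := by
              simp_rw [norm_mul, norm_exp_I_yu, one_mul]

end C

theorem stmt17 {Ω : Type*} [MeasurableSpace Ω] (μ : Measure Ω) [IsProbabilityMeasure μ]
    (q : ℝ → ℝ) (hq0 : ∀ x, 0 ≤ q x) (hqint : Integrable q)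
    (hq1 : ∫ x : ℝ, q x = 1) (hqne : ∀ u, ft1 q u ≠ 0)
    (m n : ℕ) (hm : 0 < m) (hn : 0 < n)
    (x : Fin n → ℝ) (ε : Fin n → Ω → ℝ) (hεmeas : ∀ i, Measurable (ε i))
    (hεindep : iIndepFun ε μ)
    (hεlaw : ∀ i, Measure.map (ε i) μ = volume.withDensity fun z => ENNReal.ofReal (q z)) :
    ∑' j : ℤ, variance (fun ω => (n : ℝ)⁻¹ * ∑ i, vphi q m j (x i + ε i ω)) μ
      ≤ Delta q m / n := by
  classical
  have hn' : ((n : ℝ)) ≠ 0 := Nat.cast_ne_zero.2 hn.ne'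
  set f : ℤ → ℝ := fun j =>
    variance (fun ω => (n : ℝ)⁻¹ * ∑ i, vphi q m j (x i + ε i ω)) μ with hf
  have hDelta0 : 0 ≤ Delta q m := by
    unfold Delta
    apply mul_nonneg (by positivity)
    apply integral_nonneg
    intro u
    positivity
  have hkey : ∀ S : Finset ℤ, ∑ j ∈ S, f j ≤ Delta q m / n := by
    intro S
    set X : ℤ → Fin n → Ω → ℝ := fun j i ω => vphi q m j (x i + ε i ω) with hX
    have hXmeas : ∀ j i, Measurable (X j i) := fun j i =>
      (vphi_continuous hqint hqne j).measurable.comp ((hεmeas i).const_add (x i))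
    have hXmem : ∀ j i, MemLp (X j i) 2 μ := by
      intro j i
      apply MemLp.of_bound (hXmeas j i).aestronglyMeasurable
        ((2 * Real.pi)⁻¹ * ∫ u : ℝ, ‖phimjstar m j u / ft1 q (-u)‖)
      filter_upwards with ω
      rw [Real.norm_eq_abs]
      exact vphi_abs_le hqint hqne j _
    have hvar : ∀ j, f j = ((n : ℝ)⁻¹) ^ 2 * ∑ i, variance (X j i) μ := by
      intro j
      rw [hf]
      beta_reduce
      have h1 : (fun ω => (n : ℝ)⁻¹ * ∑ i, vphi q m j (x i + ε i ω))
          = fun ω => (n : ℝ)⁻¹ * (∑ i, X j i) ω := by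
        funext ω
        rw [Finset.sum_apply]
      rw [h1, variance_const_mul]
      congr 1
      apply IndepFun.variance_sum (fun i _ => hXmem j i)
      intro i _ k _ hik
      have hind : IndepFun (ε i) (ε k) μ := hεindep.indepFun hik
      exact hind.comp ((vphi_continuous hqint hqne j).measurable.comp
          (measurable_const.add measurable_id))
        ((vphi_continuous hqint hqne j).measurable.comp
          (measurable_const.add measurable_id))
    have hvarle : ∀ j i, variance (X j i) μ ≤ ∫ ω, (X j i ω) ^ 2 ∂μ := by
      intro j i
      have h := variance_le_expectation_sq (μ := μ) (hXmeas j i).aestronglyMeasurable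
      simpa using h
    have hint : ∀ j i, Integrable (fun ω => (X j i ω) ^ 2) μ := fun j i =>
      (hXmem j i).integrable_sq
    calc ∑ j ∈ S, f j
        = ((n : ℝ)⁻¹) ^ 2 * ∑ j ∈ S, ∑ i, variance (X j i) μ := by
          rw [Finset.mul_sum]
          exact Finset.sum_congr rfl fun j _ => hvar j
      _ ≤ ((n : ℝ)⁻¹) ^ 2 * ∑ i : Fin n, ∑ j ∈ S, ∫ ω, (X j i ω) ^ 2 ∂μ := by
          apply mul_le_mul_of_nonneg_left _ (by positivity)
          rw [Finset.sum_comm]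
          exact Finset.sum_le_sum fun i _ => Finset.sum_le_sum fun j _ => hvarle j i
      _ ≤ ((n : ℝ)⁻¹) ^ 2 * ∑ i : Fin n, Delta q m := by
          apply mul_le_mul_of_nonneg_left _ (by positivity)
          apply Finset.sum_le_sum
          intro i _
          rw [← integral_finset_sum S (fun j _ => hint j i)]
          have hDe : ∫ (_ : Ω), Delta q m ∂μ = Delta q m := by
            rw [integral_const, probReal_univ, one_smul]
          rw [← hDe]
          apply integral_mono_of_nonneg
          · filter_upwards with ω
            exact Finset.sum_nonneg fun j _ => sq_nonneg _
          · exact integrable_const _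
          · filter_upwards with ω
            exact bessel_pointwise hqint hqne hm S (x i + ε i ω)
      _ = Delta q m / n := by
          rw [Finset.sum_const, Finset.card_univ, Fintype.card_fin, nsmul_eq_mul]
          field_simp
  by_cases hsumm : Summable f
  · exact Summable.tsum_le_of_sum_le hsumm hkey
  · rw [show (∑' j : ℤ, variance (fun ω => (n : ℝ)⁻¹ * ∑ i, vphi q m j (x i + ε i ω)) μ)
        = ∑' j, f j from rfl, tsum_eq_zero_of_not_summable hsumm]
    exact div_nonneg hDelta0 (Nat.cast_nonneg n)
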